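/- For the d×d Werner state ρ_d, SIC inputs, and coefficients β_{st} = (d(d+1)δ_{st}−1)/d³, the quantity I := Σ_{s,t=1}^{d²} β_{st}·tr[(|φ_s⟩⟨φ_s|^T/d)⊗(|φ_t⟩⟨φ_t|^T/d)·ρ_d] equals (1−v(d+1))/d⁴, which is negative if and only if v > 1/(d+1). -/

import Mathlib

open Matrix Kronecker

noncomputable section

/-- The flip (swap) operator `F = Σ_{i,j} |ij⟩⟨ji|` on `ℂ^d ⊗ ℂ^d`. -/
def swapF (d : ℕ) : Matrix (Fin d × Fin d) (Fin d × Fin d) ℂ :=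
  Matrix.of fun p q => if p.1 = q.2 ∧ p.2 = q.1 then 1 else 0

/-- The `d × d` Werner state `ρ_d = v (𝟙−F)/(d(d−1)) + (1−v) 𝟙/d²`. -/
def rhoW (d : ℕ) (v : ℝ) : Matrix (Fin d × Fin d) (Fin d × Fin d) ℂ :=
  ((v / (d * (d - 1)) : ℝ) : ℂ) • (1 - swapF d)
    + (((1 - v) / d^2 : ℝ) : ℂ) • 1

/-!
Against `A ⊗ B` the identity contributes `tr A · tr B` and the swap `tr (A B)`, so for the
transposed projectors the summand depends only on the overlap `|⟨φ_s|φ_t⟩|²`. By the SIC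
condition it then takes one value on the diagonal `s = t` and another off it, and the double
sum collapses to `d²` diagonal and `d⁴ - d²` off-diagonal terms.
-/

theorem trace_kronecker_mul_swapF {d : ℕ} (A B : Matrix (Fin d) (Fin d) ℂ) :
    ((A ⊗ₖ B) * swapF d).trace = (A * B).trace := by
  simp only [trace, diag, mul_apply, swapF, kroneckerMap_apply, of_apply, Fintype.sum_prod_type,
    mul_ite, mul_one, mul_zero, ite_and]
  rw [Finset.sum_comm]
  simp only [Finset.sum_ite_irrel, Finset.sum_ite_eq', Finset.mem_univ, if_true,
    Finset.sum_const_zero]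
  rw [Finset.sum_comm]

theorem trace_kronecker_mul_rhoW {d : ℕ} (v : ℝ) (A B : Matrix (Fin d) (Fin d) ℂ) :
    ((A ⊗ₖ B) * rhoW d v).trace =
      ((v / (d * (d - 1)) : ℝ) : ℂ) * (A.trace * B.trace - (A * B).trace)
        + (((1 - v) / d ^ 2 : ℝ) : ℂ) * (A.trace * B.trace) := by
  simp only [rhoW, Matrix.mul_add, Matrix.mul_smul, Matrix.mul_sub, Matrix.mul_one, trace_add,
    trace_smul, trace_sub, trace_kronecker, trace_kronecker_mul_swapF, smul_eq_mul]

theorem trace_transpose_vecMulVec_star {n : Type*} [Fintype n] (x : n → ℂ) :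
    (vecMulVec x (star x))ᵀ.trace = star x ⬝ᵥ x := by
  rw [trace_transpose, trace_vecMulVec, dotProduct_comm]

theorem trace_transpose_vecMulVec_star_mul {n : Type*} [Fintype n] (x y : n → ℂ) :
    ((vecMulVec x (star x))ᵀ * (vecMulVec y (star y))ᵀ).trace
      = Complex.normSq (star x ⬝ᵥ y) := by
  rw [← transpose_mul, trace_transpose, vecMulVec_mul_vecMulVec, trace_vecMulVec, dotProduct_smul,
    smul_eq_mul, dotProduct_comm y, star_dotProduct y x, mul_comm, Complex.star_def,
    Complex.mul_conj]

theorem trace_smul_projT_kronecker_mul_rhoW {d : ℕ} (v : ℝ) {x y : Fin d → ℂ}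
    (hx : star x ⬝ᵥ x = 1) (hy : star y ⬝ᵥ y = 1) :
    ((((d : ℂ)⁻¹ • (vecMulVec x (star x))ᵀ) ⊗ₖ ((d : ℂ)⁻¹ • (vecMulVec y (star y))ᵀ))
        * rhoW d v).trace
      = (((v / (d * (d - 1)) * (1 - Complex.normSq (star x ⬝ᵥ y)) + (1 - v) / d ^ 2) / d ^ 2
          : ℝ) : ℂ) := by
  rw [trace_kronecker_mul_rhoW, smul_mul_smul, trace_smul, trace_smul, trace_smul,
    trace_transpose_vecMulVec_star, trace_transpose_vecMulVec_star,
    trace_transpose_vecMulVec_star_mul, hx, hy]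
  push_cast
  ring

theorem sum_sum_ite_eq_const {ι R : Type*} [Fintype ι] [DecidableEq ι] [Ring R] (a b : R) :
    ∑ s : ι, ∑ t : ι, (if s = t then a else b) =
      (Fintype.card ι : R) * a + ((Fintype.card ι : R) ^ 2 - Fintype.card ι) * b := by
  have h : ∀ s t : ι, (if s = t then a else b) = b + if s = t then a - b else 0 := by
    intro s t; split_ifs <;> abel
  simp only [h, Finset.sum_add_distrib, Finset.sum_ite_eq, Finset.mem_univ, if_true,
    Finset.sum_const, Finset.card_univ, nsmul_eq_mul]
  noncomm_ring

theorem one_sub_mul_div_neg_iff {a c : ℝ} (ha : 0 < a) (hc : 0 < c) (v : ℝ) :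
    (1 - v * a) / c < 0 ↔ v > 1 / a := by
  rw [div_lt_iff₀ hc, zero_mul, gt_iff_lt, div_lt_iff₀ ha]
  constructor <;> intro h <;> linarith

theorem wernerD_inequality_value (d : ℕ) (hd : 2 ≤ d) (v : ℝ)
    (φ : Fin (d^2) → Fin d → ℂ)
    (hunit : ∀ s, ∑ i, star (φ s i) * φ s i = 1)
    (hsic : ∀ s t, Complex.normSq (∑ i, star (φ s i) * φ t i)
      = ((if s = t then (d : ℝ) else 0) + 1) / ((d : ℝ) + 1)) :
    (∑ s, ∑ t,
      ((((d : ℝ) * ((d : ℝ) + 1) * (if s = t then 1 else 0) - 1) / (d : ℝ)^3 : ℝ) : ℂ) *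
        ((((d : ℂ)⁻¹ • (vecMulVec (φ s) (star (φ s)))ᵀ)
          ⊗ₖ ((d : ℂ)⁻¹ • (vecMulVec (φ t) (star (φ t)))ᵀ)) * rhoW d v).trace)
      = (((1 - v * ((d : ℝ) + 1)) / (d : ℝ)^4 : ℝ) : ℂ) ∧
    ((1 - v * ((d : ℝ) + 1)) / (d : ℝ)^4 < 0 ↔ v > 1/((d : ℝ) + 1)) := by
  have hd2 : (2 : ℝ) ≤ d := by exact_mod_cast hd
  have hd1 : (d : ℝ) - 1 ≠ 0 := by linarith
  have hsummand : ∀ s t : Fin (d ^ 2),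
      ((((d : ℝ) * ((d : ℝ) + 1) * (if s = t then 1 else 0) - 1) / (d : ℝ)^3 : ℝ) : ℂ) *
        ((((d : ℂ)⁻¹ • (vecMulVec (φ s) (star (φ s)))ᵀ)
          ⊗ₖ ((d : ℂ)⁻¹ • (vecMulVec (φ t) (star (φ t)))ᵀ)) * rhoW d v).trace
      = ((if s = t then (d * (d + 1) - 1) / d ^ 3 * ((1 - v) / d ^ 4)
          else -1 / d ^ 3 * ((v / ((d - 1) * (d + 1)) + (1 - v) / d ^ 2) / d ^ 2) : ℝ) : ℂ) := by
    intro s t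
    rw [trace_smul_projT_kronecker_mul_rhoW v (hunit s) (hunit t), ← Complex.ofReal_mul,
      show Complex.normSq (star (φ s) ⬝ᵥ φ t) = _ from hsic s t]
    congr 1
    split_ifs <;> field_simp <;> ring
  refine ⟨?_, one_sub_mul_div_neg_iff (by linarith) (by positivity) v⟩
  simp_rw [hsummand, ← Complex.ofReal_sum, sum_sum_ite_eq_const, Fintype.card_fin]
  congr 1
  push_cast
  field_simp
  ring
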